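/- For the Rosen continued fraction of odd index k, letting R be the positive root of R^2 + (2-λ)R - 1 = 0, one has |x - p_n/q_n| ≤ 1/(q_n^2 (1/R - λ/2)), assuming q_{n+1}/q_n > 1/R. -/

import Mathlib

open Real

/-- The Rosen continued fraction map `S(x) = |1/x| - [|1/x|]_λ` on `[-λ/2, λ/2)`,
where `[w]_λ = bλ` for the unique integer `b` with `w ∈ [bλ - λ/2, bλ + λ/2)`. -/
noncomputable def rosenMap (lam : ℝ) (x : ℝ) : ℝ :=
  if x = 0 then 0 else |x⁻¹| - (⌊|x⁻¹| / lam + 1 / 2⌋ : ℤ) * lam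

/-- The sign digit `ε_{n+1}(x) = sgn(S^n x)`. -/
noncomputable def rosenEps (lam x : ℝ) (n : ℕ) : ℝ :=
  Real.sign ((rosenMap lam)^[n] x)

/-- The digit `a_{n+1}(x) = [|1/S^n x|]_λ`. -/
noncomputable def rosenA (lam x : ℝ) (n : ℕ) : ℝ :=
  (⌊|((rosenMap lam)^[n] x)⁻¹| / lam + 1 / 2⌋ : ℤ) * lam

/-- The convergent matrix `[[p_{n-1}, p_n], [q_{n-1}, q_n]] = ∏_{i=1}^n [[0, ε_i], [1, a_i]]`. -/
noncomputable def rosenMat (lam x : ℝ) (n : ℕ) : Matrix (Fin 2) (Fin 2) ℝ :=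
  ((List.range n).map (fun i => !![0, rosenEps lam x i; 1, rosenA lam x i])).prod

/-- The numerator `p_n` of the `n`-th Rosen convergent. -/
noncomputable def rosenP (lam x : ℝ) (n : ℕ) : ℝ := rosenMat lam x n 0 1

/-- The denominator `q_n` of the `n`-th Rosen convergent. -/
noncomputable def rosenQ (lam x : ℝ) (n : ℕ) : ℝ := rosenMat lam x n 1 1

/-!
Unwinding the matrix recursion shows that `x` is the Möbius image of its `n`-th remainder
`t = Sⁿx` under the convergent matrix: `x = (p_{n-1} t + p_n) / (q_{n-1} t + q_n)`. Since the
determinant is `±1`, this gives `x - p_n/q_n = ±t / (q_n (q_{n-1} t + q_n))`. The growth hypothesis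
gives `0 ≤ q_{n-1} < R q_n`, and `|t| ≤ λ/2 ≤ R`, so the denominator is at least
`q_n² R (1/R - λ/2)` while the numerator is at most `R`.
-/

open Matrix

section ContinuedFractionMatrix

variable {A : Type*} [CommRing A] (ε a : ℕ → A)

noncomputable def cfMat (n : ℕ) : Matrix (Fin 2) (Fin 2) A :=
  ((List.range n).map (fun i => !![0, ε i; 1, a i])).prod

@[simp]
lemma cfMat_zero : cfMat ε a 0 = 1 := by
  simp [cfMat]

lemma cfMat_succ (n : ℕ) : cfMat ε a (n + 1) = cfMat ε a n * !![0, ε n; 1, a n] := by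
  simp [cfMat, List.range_succ]

lemma cfMat_succ_apply_zero (n : ℕ) (i : Fin 2) :
    cfMat ε a (n + 1) i 0 = cfMat ε a n i 1 := by
  simp [cfMat_succ, Matrix.mul_apply, Fin.sum_univ_two]

lemma cfMat_succ_apply_one (n : ℕ) (i : Fin 2) :
    cfMat ε a (n + 1) i 1 = cfMat ε a n i 0 * ε n + cfMat ε a n i 1 * a n := by
  simp [cfMat_succ, Matrix.mul_apply, Fin.sum_univ_two]

lemma det_cfMat (n : ℕ) : (cfMat ε a n).det = ∏ i ∈ Finset.range n, -ε i := by
  induction n with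
  | zero => simp
  | succ n ih => rw [cfMat_succ, det_mul, ih, Finset.prod_range_succ, det_fin_two_of]; ring

/-- Read `T m` as the `m`-th remainder `Sᵐ x` of a continued-fraction expansion of `x = T 0`. -/
lemma cfMat_moebius [IsDomain A] (T : ℕ → A) (hT : ∀ m, T m ≠ 0)
    (hrec : ∀ m, T m * (a m + T (m + 1)) = ε m) (n : ℕ) :
    T 0 * (cfMat ε a n 1 0 * T n + cfMat ε a n 1 1) =
      cfMat ε a n 0 0 * T n + cfMat ε a n 0 1 := by
  induction n with
  | zero => simp
  | succ n ih =>
    simp only [cfMat_succ_apply_zero, cfMat_succ_apply_one]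
    apply mul_left_cancel₀ (hT n)
    linear_combination (T 0 * cfMat ε a n 1 1 - cfMat ε a n 0 1) * hrec n + ε n * ih

end ContinuedFractionMatrix

lemma sub_div_eq_det_mul_div_of_moebius {K : Type*} [Field K] (M : Matrix (Fin 2) (Fin 2) K)
    {x t : K} (hx : x * (M 1 0 * t + M 1 1) = M 0 0 * t + M 0 1) (hq : M 1 1 ≠ 0)
    (hD : M 1 0 * t + M 1 1 ≠ 0) :
    x - M 0 1 / M 1 1 = M.det * t / (M 1 1 * (M 1 0 * t + M 1 1)) := by
  rw [eq_div_iff (mul_ne_zero hq hD), det_fin_two, sub_mul, div_mul_eq_mul_div,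
    mul_div_assoc, mul_div_cancel_left₀ _ hq]
  linear_combination M 1 1 * hx

lemma two_mul_cos_pi_div_lt_two {k : ℕ} (hk : 1 ≤ k) : 2 * cos (π / k) < 2 := by
  have hk' : (1 : ℝ) ≤ k := by exact_mod_cast hk
  have hpos : 0 < π / k := by positivity
  have hle : π / k ≤ π := div_le_self pi_pos.le hk'
  have := cos_lt_cos_of_nonneg_of_le_pi le_rfl hle hpos
  rw [cos_zero] at this
  linarith

section RosenRoot

variable {lam R : ℝ} (hR : 0 < R) (hroot : R ^ 2 + (2 - lam) * R - 1 = 0)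
include hR hroot

lemma half_le_of_sq_add_mul_sub_one_eq_zero : lam / 2 ≤ R := by
  nlinarith [sq_nonneg (lam - 2), sq_nonneg (lam / 2 - R)]

lemma one_div_sub_half_pos (hlam : lam < 2) : 0 < 1 / R - lam / 2 := by
  have h1R : 1 / R = R + 2 - lam := by
    field_simp
    linear_combination -hroot
  linarith [half_le_of_sq_add_mul_sub_one_eq_zero hR hroot]

end RosenRoot

lemma mul_one_sub_mul_le_add {q q' t h R : ℝ} (hq'0 : 0 ≤ q') (hq' : q' ≤ R * q)
    (ht : |t| ≤ h) : q * (1 - R * h) ≤ q' * t + q := by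
  have hh : 0 ≤ h := (abs_nonneg t).trans ht
  nlinarith [neg_abs_le t, mul_le_mul_of_nonneg_left ht hq'0, mul_le_mul_of_nonneg_right hq' hh]

lemma one_sub_mul_pos_of_one_div_sub_pos {h R : ℝ} (hR : 0 < R) (hc : 0 < 1 / R - h) :
    0 < 1 - R * h := by
  simpa [mul_sub, hR.ne'] using mul_pos hR hc

lemma abs_div_le_one_div_sq_mul {q q' t h R : ℝ} (hR : 0 < R) (hq : 0 < q) (hq'0 : 0 ≤ q')
    (hq' : q' ≤ R * q) (ht : |t| ≤ h) (hhR : h ≤ R) (hc : 0 < 1 / R - h) :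
    |t| / (q * (q' * t + q)) ≤ 1 / (q ^ 2 * (1 / R - h)) := by
  have hRh := one_sub_mul_pos_of_one_div_sub_pos hR hc
  calc |t| / (q * (q' * t + q)) ≤ R / (q * (q * (1 - R * h))) :=
        div_le_div₀ hR.le (ht.trans hhR) (by positivity)
          (mul_le_mul_of_nonneg_left (mul_one_sub_mul_le_add hq'0 hq' ht) hq.le)
    _ = 1 / (q ^ 2 * (1 / R - h)) := by field_simp

section Rosen

variable {lam x : ℝ}

lemma rosenMat_eq_cfMat : rosenMat lam x = cfMat (rosenEps lam x) (rosenA lam x) := rfl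

lemma rosenMap_iterate_mul_rosenA_add {m : ℕ} (hm : (rosenMap lam)^[m] x ≠ 0) :
    (rosenMap lam)^[m] x * (rosenA lam x m + (rosenMap lam)^[m + 1] x) = rosenEps lam x m := by
  rw [Function.iterate_succ_apply', rosenMap, if_neg hm, rosenA, add_sub_cancel, rosenEps]
  rcases hm.lt_or_gt with h | h
  · rw [abs_of_neg (inv_lt_zero.2 h), sign_of_neg h, mul_neg, mul_inv_cancel₀ hm]
  · rw [abs_of_pos (inv_pos.2 h), sign_of_pos h, mul_inv_cancel₀ hm]

lemma abs_rosenEps {m : ℕ} (hm : (rosenMap lam)^[m] x ≠ 0) : |rosenEps lam x m| = 1 := by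
  rcases hm.lt_or_gt with h | h
  · simp [rosenEps, sign_of_neg h]
  · simp [rosenEps, sign_of_pos h]

lemma abs_det_rosenMat (hinf : ∀ i, (rosenMap lam)^[i] x ≠ 0) (n : ℕ) :
    |(rosenMat lam x n).det| = 1 := by
  simp [rosenMat_eq_cfMat, det_cfMat, Finset.abs_prod, abs_rosenEps (hinf _)]

lemma rosenMat_moebius (hinf : ∀ i, (rosenMap lam)^[i] x ≠ 0) (n : ℕ) :
    x * (rosenMat lam x n 1 0 * (rosenMap lam)^[n] x + rosenMat lam x n 1 1) =
      rosenMat lam x n 0 0 * (rosenMap lam)^[n] x + rosenMat lam x n 0 1 :=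
  cfMat_moebius _ _ (fun m => (rosenMap lam)^[m] x) hinf
    (fun m => rosenMap_iterate_mul_rosenA_add (hinf m)) n

lemma sub_rosenP_div_rosenQ (hinf : ∀ i, (rosenMap lam)^[i] x ≠ 0) {n : ℕ}
    (hq : rosenQ lam x n ≠ 0)
    (hD : rosenMat lam x n 1 0 * (rosenMap lam)^[n] x + rosenQ lam x n ≠ 0) :
    x - rosenP lam x n / rosenQ lam x n = (rosenMat lam x n).det * (rosenMap lam)^[n] x /
      (rosenQ lam x n * (rosenMat lam x n 1 0 * (rosenMap lam)^[n] x + rosenQ lam x n)) :=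
  sub_div_eq_det_mul_div_of_moebius _ (rosenMat_moebius hinf n) hq hD

variable {R : ℝ} (hR : 0 < R) (hq : ∀ n, 1 / R < rosenQ lam x (n + 1) / rosenQ lam x n)
include hR hq

lemma rosenQ_pos (n : ℕ) : 0 < rosenQ lam x n := by
  induction n with
  | zero => simp [rosenQ, rosenMat_eq_cfMat]
  | succ n ih =>
    have := (lt_div_iff₀ ih).1 (hq n)
    have : 0 < 1 / R * rosenQ lam x n := by positivity
    linarith

lemma rosenMat_one_zero_nonneg (n : ℕ) : 0 ≤ rosenMat lam x n 1 0 := by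
  cases n with
  | zero => simp [rosenMat_eq_cfMat]
  | succ n =>
    rw [rosenMat_eq_cfMat, cfMat_succ_apply_zero]
    exact (rosenQ_pos hR hq n).le

lemma rosenMat_one_zero_le (n : ℕ) : rosenMat lam x n 1 0 ≤ R * rosenQ lam x n := by
  cases n with
  | zero => simpa [rosenMat_eq_cfMat, rosenQ] using hR.le
  | succ n =>
    rw [rosenMat_eq_cfMat, cfMat_succ_apply_zero]
    have := (lt_div_iff₀ (rosenQ_pos hR hq n)).1 (hq n)
    rw [one_div_mul_eq_div, div_lt_iff₀' hR] at this
    exact this.le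

end Rosen

theorem rosen_error_bound_odd_general (k : ℕ) (hk : 3 ≤ k) (lam : ℝ)
    (hlam : lam = 2 * Real.cos (π / k)) (R : ℝ) (hR : 0 < R)
    (hroot : R ^ 2 + (2 - lam) * R - 1 = 0)
    (x : ℝ)
    (hinf : ∀ i : ℕ, (rosenMap lam)^[i] x ≠ 0)
    (hq : ∀ n : ℕ, 1 / R < rosenQ lam x (n + 1) / rosenQ lam x n)
    (hS : ∀ n : ℕ, |(rosenMap lam)^[n] x| ≤ lam / 2) (n : ℕ) :
    |x - rosenP lam x n / rosenQ lam x n| ≤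
      1 / (rosenQ lam x n ^ 2 * (1 / R - lam / 2)) := by
  have hlam2 : lam < 2 := hlam ▸ two_mul_cos_pi_div_lt_two (by omega)
  have hc := one_div_sub_half_pos hR hroot hlam2
  have hqn := rosenQ_pos hR hq n
  have hq'0 := rosenMat_one_zero_nonneg hR hq n
  have hq' := rosenMat_one_zero_le hR hq n
  have hD : 0 < rosenMat lam x n 1 0 * (rosenMap lam)^[n] x + rosenQ lam x n :=
    (mul_pos hqn (one_sub_mul_pos_of_one_div_sub_pos hR hc)).trans_le
      (mul_one_sub_mul_le_add hq'0 hq' (hS n))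
  rw [sub_rosenP_div_rosenQ hinf hqn.ne' hD.ne', abs_div,
    abs_mul, abs_det_rosenMat hinf, one_mul, abs_of_pos (mul_pos hqn hD)]
  exact abs_div_le_one_div_sq_mul hR hqn hq'0 hq' (hS n)
    (half_le_of_sq_add_mul_sub_one_eq_zero hR hroot) hc

/-- For the Rosen continued fraction of odd index `k`, letting `R` be the positive
root of `R² + (2-λ)R - 1 = 0`, one has `|x - p_n/q_n| ≤ 1/(q_n² (1/R - λ/2))`,
assuming `q_{n+1}/q_n > 1/R`. -/
theorem rosen_error_bound_odd (k : ℕ) (hk : 3 ≤ k) (hko : Odd k) (lam : ℝ)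
    (hlam : lam = 2 * Real.cos (π / k)) (R : ℝ) (hR : 0 < R)
    (hroot : R ^ 2 + (2 - lam) * R - 1 = 0)
    (x : ℝ) (hx : x ∈ Set.Ico (-lam / 2) (lam / 2))
    (hinf : ∀ i : ℕ, (rosenMap lam)^[i] x ≠ 0)
    (hq : ∀ n : ℕ, 1 / R < rosenQ lam x (n + 1) / rosenQ lam x n)
    (hS : ∀ n : ℕ, |(rosenMap lam)^[n] x| ≤ lam / 2) (n : ℕ) :
    |x - rosenP lam x n / rosenQ lam x n| ≤
      1 / (rosenQ lam x n ^ 2 * (1 / R - lam / 2)) :=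
  rosen_error_bound_odd_general k hk lam hlam R hR hroot x hinf hq hS n
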